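/- arXiv:2004.02453 — 3 statements merged into one kernel-verified Lean document; each statement's English description precedes it below -/
import Mathlib

section
/- For a closed subset C of K the following are equivalent: (i) C is a convex-trace set with respect to Φ; (ii) there exist a family {φ_i}_{i∈I} ⊆ Φ that is uniformly bounded on K and a bounded family {λ_i}_{i∈I} ⊆ ℝ such that C = ∩_{i∈I} {x ∈ K : φ_i(x) ≤ λ_i}; (iii) there exists a lower semicontinuous convex-trace function f on K such that C = {x ∈ K : f(x) ≤ 0}. -/
open MeasureTheory Set

section Defs

variable {K : Type*} [TopologicalSpace K] [CompactSpace K]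

/-- The canonical injection `δ^Φ : K → Φ*`, `δ^Φ(x)(φ) = φ(x)`. -/
noncomputable def deltaPhi (Φ : Submodule ℝ C(K, ℝ)) (x : K) : WeakDual ℝ ↥Φ :=
  (ContinuousMap.evalCLM ℝ x).comp Φ.subtypeL

/-- The set `K(Φ) = {Q ∈ Φ* : ‖Q‖ = Q(𝟏) = 1}`. -/
noncomputable def KPhi (Φ : Submodule ℝ C(K, ℝ))
    (h1 : ContinuousMap.const K (1 : ℝ) ∈ Φ) : Set (WeakDual ℝ ↥Φ) :=
  {Q | @norm _ (@ContinuousLinearMap.hasOpNorm ℝ ℝ ↥Φ ℝ _ _ _ _ _ _ _) (WeakDual.toStrongDual Q) = 1 ∧ Q ⟨ContinuousMap.const K (1 : ℝ), h1⟩ = 1}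

end Defs

section DefsTC

variable {K : Type*} [TopologicalSpace K] [CompactSpace K]

/-- A closed set `C ⊆ K` is convex-trace w.r.t. `Φ` if `δ^Φ(C) = δ^Φ(K) ∩ Ĉ` for some
weak*-closed convex subset `Ĉ` of `K(Φ)`. -/
def TraceConvexSet (Φ : Submodule ℝ C(K, ℝ)) (h1 : ContinuousMap.const K (1 : ℝ) ∈ Φ)
    (C : Set K) : Prop :=
  IsClosed C ∧ ∃ Ch : Set (WeakDual ℝ ↥Φ), Ch ⊆ KPhi Φ h1 ∧ IsClosed Ch ∧ Convex ℝ Ch ∧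
    deltaPhi Φ '' C = deltaPhi Φ '' Set.univ ∩ Ch

end DefsTC

section DefsLsc

variable {K : Type*} [TopologicalSpace K] [CompactSpace K]

/-- `f : K → ℝ` is a lower semicontinuous convex-trace function if `f = F ∘ δ^Φ` for some
convex weak*-lower semicontinuous real-valued `F` on `K(Φ)`. -/
def LscConvexTrace (Φ : Submodule ℝ C(K, ℝ)) (h1 : ContinuousMap.const K (1 : ℝ) ∈ Φ)
    (f : K → ℝ) : Prop :=
  ∃ F : WeakDual ℝ ↥Φ → ℝ, ConvexOn ℝ (KPhi Φ h1) F ∧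
    LowerSemicontinuousOn F (KPhi Φ h1) ∧ ∀ x : K, f x = F (deltaPhi Φ x)

end DefsLsc

/-!
Every closed convex `Ĉ ⊆ K(Φ)` is, by Hahn–Banach in the weak* topology (whose continuous
functionals are the evaluations at elements of `Φ`), the intersection of the half-spaces
`{Q | Q φ ≤ λ}` containing it; normalising by `‖φ‖` keeps `‖φ‖ ≤ 1` and `|λ| ≤ 1`, since both
sides of the separation lie in `K(Φ)` where `|Q φ| ≤ ‖φ‖`. Pulling back along the injective map
`δ^Φ` gives (i) ⇒ (ii). Conversely, `F Q = sup_i (Q φ_i - λ_i)` is a supremum of weak*-continuous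
affine functions, finite on `K(Φ)` by the uniform bounds, hence convex and lower semicontinuous,
and `C = {F ∘ δ^Φ ≤ 0}` gives (ii) ⇒ (iii). Finally the sublevel set `{Q ∈ K(Φ) | F Q ≤ 0}` of an
lsc convex `F` is a weak*-closed convex subset of `K(Φ)` whose trace on `δ^Φ(K)` is `δ^Φ(C)`.
-/

instance {E : Type*} [AddCommGroup E] [Module ℝ E] [TopologicalSpace E] :
    LocallyConvexSpace ℝ (WeakDual ℝ E) :=
  WeakBilin.locallyConvexSpace

theorem WeakDual.exists_eq_eval {E : Type*} [AddCommGroup E] [Module ℝ E] [TopologicalSpace E]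
    (L : WeakDual ℝ E →L[ℝ] ℝ) : ∃ e : E, ∀ Q : WeakDual ℝ E, L Q = Q e := by
  obtain ⟨e, rfl⟩ := LinearMap.dualEmbedding_surjective (topDualPairing ℝ E) L
  exact ⟨e, fun Q => rfl⟩

theorem convexOn_ciSup {ι E : Type*} [AddCommGroup E] [Module ℝ E] {s : Set E}
    {f : ι → E → ℝ} (hs : Convex ℝ s) (hf : ∀ i, ConvexOn ℝ s (f i))
    (bdd : ∀ x ∈ s, BddAbove (range fun i => f i x)) :
    ConvexOn ℝ s fun x => ⨆ i, f i x := by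
  cases isEmpty_or_nonempty ι
  · simpa only [Real.iSup_of_isEmpty] using convexOn_const (0 : ℝ) hs
  refine ⟨hs, fun x hx y hy a b ha hb hab => ciSup_le fun i => ?_⟩
  calc f i (a • x + b • y) ≤ a * f i x + b * f i y := (hf i).2 hx hy ha hb hab
    _ ≤ a * (⨆ j, f j x) + b * ⨆ j, f j y :=
      add_le_add (mul_le_mul_of_nonneg_left (le_ciSup (bdd x hx) i) ha)
        (mul_le_mul_of_nonneg_left (le_ciSup (bdd y hy) i) hb)

theorem convexOn_eval_sub {E : Type*} [AddCommGroup E] [Module ℝ E] [TopologicalSpace E]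
    {s : Set (WeakDual ℝ E)} (hs : Convex ℝ s) (e : E) (c : ℝ) :
    ConvexOn ℝ s fun Q => Q e - c := by
  refine ⟨hs, fun Q _ R _ a b _ _ hab => le_of_eq ?_⟩
  change a * Q e + b * R e - c = a * (Q e - c) + b * (R e - c)
  linear_combination c * hab

section KPhi

variable {K : Type*} [TopologicalSpace K] [CompactSpace K] {Φ : Submodule ℝ C(K, ℝ)}
  {h1 : ContinuousMap.const K (1 : ℝ) ∈ Φ}

-- Instance search does not find the operator norm on `StrongDual ℝ Φ`; it is passed explicitly,
-- as in the definition of `KPhi`.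
theorem mem_KPhi_iff {Q : WeakDual ℝ Φ} :
    Q ∈ KPhi Φ h1 ↔ (∀ φ : Φ, |Q φ| ≤ ‖(φ : C(K, ℝ))‖) ∧ Q ⟨_, h1⟩ = 1 := by
  have hle (φ : Φ) := @ContinuousLinearMap.le_opNorm ℝ ℝ Φ ℝ _ _ _ _ _ _ _ _
    (WeakDual.toStrongDual Q) φ
  constructor
  · rintro ⟨hQ, hQ1⟩
    refine ⟨fun φ => ?_, hQ1⟩
    exact (hle φ).trans_eq ((congrArg (· * ‖φ‖) hQ).trans (one_mul _))
  · rintro ⟨hQ, hQ1⟩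
    refine ⟨le_antisymm (ContinuousLinearMap.opNorm_le_bound _ zero_le_one fun φ => ?_) ?_, hQ1⟩
    · simpa using hQ φ
    · have h1norm : ‖ContinuousMap.const K (1 : ℝ)‖ ≤ 1 :=
        (ContinuousMap.norm_le _ zero_le_one).2 fun x => by simp
      have := @ContinuousLinearMap.unit_le_opNorm ℝ ℝ Φ ℝ _ _ _ _ _ _ _ _
        (WeakDual.toStrongDual Q) ⟨_, h1⟩ h1norm
      refine le_trans (le_of_eq ?_) this
      change 1 = |Q _|
      rw [hQ1, abs_one]

theorem isClosed_KPhi : IsClosed (KPhi Φ h1) := by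
  have : KPhi Φ h1 = (⋂ φ : Φ, {Q : WeakDual ℝ Φ | |Q φ| ≤ ‖(φ : C(K, ℝ))‖}) ∩
      {Q | Q ⟨_, h1⟩ = 1} := by
    ext Q
    simp [mem_KPhi_iff]
  rw [this]
  exact (isClosed_iInter fun φ =>
    isClosed_le (WeakDual.eval_continuous φ).abs continuous_const).inter
      (isClosed_eq (WeakDual.eval_continuous _) continuous_const)

theorem convex_KPhi : Convex ℝ (KPhi Φ h1) := by
  intro Q hQ R hR a b ha hb hab
  rw [mem_KPhi_iff] at hQ hR ⊢
  refine ⟨fun φ => ?_, ?_⟩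
  · calc |a * Q φ + b * R φ| ≤ a * |Q φ| + b * |R φ| := by
          refine (abs_add_le _ _).trans_eq ?_
          rw [abs_mul, abs_mul, abs_of_nonneg ha, abs_of_nonneg hb]
      _ ≤ a * ‖(φ : C(K, ℝ))‖ + b * ‖(φ : C(K, ℝ))‖ := by gcongr; exacts [hQ.1 φ, hR.1 φ]
      _ = ‖(φ : C(K, ℝ))‖ := by rw [← add_mul, hab, one_mul]
  · change a * Q _ + b * R _ = 1
    rw [hQ.2, hR.2, mul_one, mul_one, hab]

theorem deltaPhi_mem_KPhi (x : K) : deltaPhi Φ x ∈ KPhi Φ h1 :=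
  mem_KPhi_iff.2 ⟨fun φ => (φ : C(K, ℝ)).norm_coe_le_norm x, rfl⟩

end KPhi

section DeltaPhi

variable {K : Type*} [TopologicalSpace K] {Φ : Submodule ℝ C(K, ℝ)}

theorem deltaPhi_injective (hsep : ∀ x y : K, x ≠ y → ∃ φ ∈ Φ, φ x ≠ φ y) :
    Function.Injective (deltaPhi Φ) := by
  intro x y hxy
  by_contra hne
  obtain ⟨φ, hφ, hφxy⟩ := hsep x y hne
  exact hφxy (DFunLike.congr_fun hxy ⟨φ, hφ⟩)

theorem eq_preimage_deltaPhi_of_image_eq (hsep : ∀ x y : K, x ≠ y → ∃ φ ∈ Φ, φ x ≠ φ y)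
    {C : Set K} {Ch : Set (WeakDual ℝ Φ)} (h : deltaPhi Φ '' C = deltaPhi Φ '' univ ∩ Ch) :
    C = deltaPhi Φ ⁻¹' Ch := by
  rw [← (deltaPhi_injective hsep).preimage_image C, h, preimage_inter, preimage_image_univ,
    univ_inter]

end DeltaPhi

section Separation

variable {K : Type*} [TopologicalSpace K] [CompactSpace K] {Φ : Submodule ℝ C(K, ℝ)}
  {h1 : ContinuousMap.const K (1 : ℝ) ∈ Φ}

def normalizedHalfspacesContaining (Ch : Set (WeakDual ℝ Φ)) : Set (Φ × ℝ) :=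
  {p | ‖(p.1 : C(K, ℝ))‖ ≤ 1 ∧ |p.2| ≤ 1 ∧ ∀ Q ∈ Ch, Q p.1 ≤ p.2}

theorem exists_mem_normalizedHalfspacesContaining_lt {Ch : Set (WeakDual ℝ Φ)}
    (hsub : Ch ⊆ KPhi Φ h1) (hcl : IsClosed Ch) (hconv : Convex ℝ Ch)
    {P : WeakDual ℝ Φ} (hP : P ∈ KPhi Φ h1) (hPCh : P ∉ Ch) :
    ∃ p ∈ normalizedHalfspacesContaining Ch, p.2 < P p.1 := by
  rcases Ch.eq_empty_or_nonempty with rfl | ⟨Q₀, hQ₀⟩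
  · exact ⟨(0, -1), ⟨by simp, by simp, by simp⟩, by simp⟩
  obtain ⟨f, u, hfCh, hfP⟩ := geometric_hahn_banach_closed_point hconv hcl hPCh
  obtain ⟨φ, hfφ⟩ := WeakDual.exists_eq_eval f
  simp only [hfφ] at hfCh hfP
  set n := ‖(φ : C(K, ℝ))‖
  have hQ₀φ := abs_le.1 ((mem_KPhi_iff.1 (hsub hQ₀)).1 φ)
  have hPφ := abs_le.1 ((mem_KPhi_iff.1 hP).1 φ)
  have hQ₀u := hfCh Q₀ hQ₀
  have hn : 0 < n := by linarith
  refine ⟨(n⁻¹ • φ, n⁻¹ * u), ⟨?_, ?_, fun Q hQ => ?_⟩, ?_⟩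
  · change ‖n⁻¹ • (φ : C(K, ℝ))‖ ≤ 1
    rw [norm_smul, norm_inv, Real.norm_of_nonneg hn.le, inv_mul_cancel₀ hn.ne']
  · rw [abs_mul, abs_of_pos (inv_pos.2 hn), inv_mul_le_one₀ hn]
    exact abs_le.2 ⟨by linarith, by linarith⟩
  · rw [map_smul, smul_eq_mul]
    exact mul_le_mul_of_nonneg_left (hfCh Q hQ).le (inv_nonneg.2 hn.le)
  · rw [map_smul, smul_eq_mul]
    exact mul_lt_mul_of_pos_left hfP (inv_pos.2 hn)

theorem mem_iff_forall_normalizedHalfspacesContaining {Ch : Set (WeakDual ℝ Φ)}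
    (hsub : Ch ⊆ KPhi Φ h1) (hcl : IsClosed Ch) (hconv : Convex ℝ Ch)
    {P : WeakDual ℝ Φ} (hP : P ∈ KPhi Φ h1) :
    P ∈ Ch ↔ ∀ p ∈ normalizedHalfspacesContaining Ch, P p.1 ≤ p.2 := by
  refine ⟨fun hPCh p hp => hp.2.2 P hPCh, fun h => ?_⟩
  by_contra hPCh
  obtain ⟨p, hp, hlt⟩ := exists_mem_normalizedHalfspacesContaining_lt hsub hcl hconv hP hPCh
  exact not_lt.2 (h p hp) hlt

end Separation

section SupEvalSub

variable {K : Type*} [TopologicalSpace K] {Φ : Submodule ℝ C(K, ℝ)}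

-- `Real.iSup` gives the junk value `0` when `S` is empty or the supremum is unbounded.
noncomputable def supEvalSub (S : Set (Φ × ℝ)) (Q : WeakDual ℝ Φ) : ℝ :=
  ⨆ p : S, Q p.1.1 - p.1.2

theorem supEvalSub_nonpos_iff {S : Set (Φ × ℝ)} {Q : WeakDual ℝ Φ}
    (hQ : BddAbove (range fun p : S => Q p.1.1 - p.1.2)) :
    supEvalSub S Q ≤ 0 ↔ ∀ p ∈ S, Q p.1 ≤ p.2 := by
  refine ⟨fun h p hp => ?_, fun h => Real.iSup_le (fun p => ?_) le_rfl⟩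
  · exact sub_nonpos.1 ((le_ciSup hQ ⟨p, hp⟩).trans h)
  · linarith [h p.1 p.2]

end SupEvalSub

section Trace

variable {K : Type*} [TopologicalSpace K] [CompactSpace K] {Φ : Submodule ℝ C(K, ℝ)}
  {h1 : ContinuousMap.const K (1 : ℝ) ∈ Φ}

theorem TraceConvexSet.exists_eq_setOf_forall_le (hsep : ∀ x y : K, x ≠ y → ∃ φ ∈ Φ, φ x ≠ φ y)
    {C : Set K} (hC : TraceConvexSet Φ h1 C) :
    ∃ S : Set (Φ × ℝ), (∃ M : ℝ, ∀ p ∈ S, ‖(p.1 : C(K, ℝ))‖ ≤ M) ∧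
      (∃ M' : ℝ, ∀ p ∈ S, |p.2| ≤ M') ∧ C = {x : K | ∀ p ∈ S, (p.1 : C(K, ℝ)) x ≤ p.2} := by
  obtain ⟨-, Ch, hsub, hcl, hconv, himage⟩ := hC
  refine ⟨normalizedHalfspacesContaining Ch, ⟨1, fun p hp => hp.1⟩, ⟨1, fun p hp => hp.2.1⟩, ?_⟩
  rw [eq_preimage_deltaPhi_of_image_eq hsep himage]
  ext x
  exact mem_iff_forall_normalizedHalfspacesContaining hsub hcl hconv (deltaPhi_mem_KPhi x)

variable {S : Set (Φ × ℝ)} {M M' : ℝ}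

theorem bddAbove_range_evalSub (hM : ∀ p ∈ S, ‖(p.1 : C(K, ℝ))‖ ≤ M) (hM' : ∀ p ∈ S, |p.2| ≤ M')
    {Q : WeakDual ℝ Φ} (hQ : Q ∈ KPhi Φ h1) :
    BddAbove (range fun p : S => Q p.1.1 - p.1.2) := by
  refine ⟨M + M', ?_⟩
  rintro _ ⟨⟨p, hp⟩, rfl⟩
  have hQp := (mem_KPhi_iff.1 hQ).1 p.1
  linarith [le_abs_self (Q p.1), neg_abs_le p.2, hM p hp, hM' p hp]

theorem convexOn_supEvalSub (hM : ∀ p ∈ S, ‖(p.1 : C(K, ℝ))‖ ≤ M) (hM' : ∀ p ∈ S, |p.2| ≤ M') :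
    ConvexOn ℝ (KPhi Φ h1) (supEvalSub S) :=
  convexOn_ciSup (f := fun (p : S) (Q : WeakDual ℝ Φ) => Q p.1.1 - p.1.2) convex_KPhi
    (fun p => convexOn_eval_sub convex_KPhi p.1.1 p.1.2) fun _ hQ =>
      bddAbove_range_evalSub hM hM' hQ

theorem lowerSemicontinuousOn_supEvalSub (hM : ∀ p ∈ S, ‖(p.1 : C(K, ℝ))‖ ≤ M)
    (hM' : ∀ p ∈ S, |p.2| ≤ M') : LowerSemicontinuousOn (supEvalSub S) (KPhi Φ h1) :=
  lowerSemicontinuousOn_ciSup (fun _ hQ => bddAbove_range_evalSub hM hM' hQ) fun p =>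
    ((WeakDual.eval_continuous p.1.1).sub continuous_const).lowerSemicontinuous
      |>.lowerSemicontinuousOn _

theorem exists_lscConvexTrace_of_eq_setOf_forall_le (hM : ∀ p ∈ S, ‖(p.1 : C(K, ℝ))‖ ≤ M)
    (hM' : ∀ p ∈ S, |p.2| ≤ M') :
    ∃ f : K → ℝ, LscConvexTrace Φ h1 f ∧
      {x : K | ∀ p ∈ S, (p.1 : C(K, ℝ)) x ≤ p.2} = {x : K | f x ≤ 0} := by
  refine ⟨supEvalSub S ∘ deltaPhi Φ, ⟨supEvalSub S, convexOn_supEvalSub hM hM',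
    lowerSemicontinuousOn_supEvalSub hM hM', fun x => rfl⟩, ?_⟩
  ext x
  have hbdd := bddAbove_range_evalSub hM hM' (deltaPhi_mem_KPhi (h1 := h1) x)
  exact (supEvalSub_nonpos_iff hbdd).symm

theorem LscConvexTrace.traceConvexSet_setOf_nonpos {f : K → ℝ} (hf : LscConvexTrace Φ h1 f)
    (hclosed : IsClosed {x | f x ≤ 0}) : TraceConvexSet Φ h1 {x | f x ≤ 0} := by
  obtain ⟨F, hFconv, hFlsc, hfF⟩ := hf
  obtain rfl : f = F ∘ deltaPhi Φ := funext hfF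
  obtain ⟨v, hv, hKv⟩ := lowerSemicontinuousOn_iff_preimage_Iic.1 hFlsc 0
  refine ⟨hclosed, KPhi Φ h1 ∩ F ⁻¹' Iic 0, inter_subset_left, hKv ▸ isClosed_KPhi.inter hv,
    hFconv.convex_le 0, ?_⟩
  ext Q
  constructor
  · rintro ⟨x, hx, rfl⟩
    exact ⟨mem_image_of_mem _ (mem_univ x), deltaPhi_mem_KPhi x, hx⟩
  · rintro ⟨⟨x, -, rfl⟩, -, hx⟩
    exact ⟨x, hx, rfl⟩

end Trace

theorem stmt6_general {K : Type*} [TopologicalSpace K] [CompactSpace K]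
    (Φ : Submodule ℝ C(K, ℝ))
    (hsep : ∀ x y : K, x ≠ y → ∃ φ ∈ Φ, φ x ≠ φ y)
    (hconst : ∀ c : ℝ, ContinuousMap.const K c ∈ Φ)
    (C : Set K) (hC : IsClosed C) :
    List.TFAE
      [TraceConvexSet Φ (hconst 1) C,
       ∃ S : Set (↥Φ × ℝ),
         (∃ M : ℝ, ∀ p ∈ S, ‖(p.1 : C(K, ℝ))‖ ≤ M) ∧
         (∃ M' : ℝ, ∀ p ∈ S, |p.2| ≤ M') ∧
         C = {x : K | ∀ p ∈ S, (p.1 : C(K, ℝ)) x ≤ p.2},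
       ∃ f : K → ℝ, LscConvexTrace Φ (hconst 1) f ∧ C = {x : K | f x ≤ 0}] := by
  tfae_have 1 → 2 := TraceConvexSet.exists_eq_setOf_forall_le hsep
  tfae_have 2 → 3 := by
    rintro ⟨S, ⟨M, hM⟩, ⟨M', hM'⟩, rfl⟩
    exact exists_lscConvexTrace_of_eq_setOf_forall_le hM hM'
  tfae_have 3 → 1 := by
    rintro ⟨f, hf, rfl⟩
    exact hf.traceConvexSet_setOf_nonpos hC
  tfae_finish

/-- For a closed `C ⊆ K` the following are equivalent: (i) `C` is a
convex-trace set w.r.t. `Φ`; (ii) `C` is an intersection of sublevel sets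
`{x : φ_i(x) ≤ λ_i}` with `{φ_i} ⊆ Φ` uniformly bounded and `{λ_i}` bounded;
(iii) `C = {x : f(x) ≤ 0}` for some lower semicontinuous convex-trace function `f`. -/
theorem stmt6 {K : Type*} [TopologicalSpace K] [CompactSpace K] [T2Space K]
    (Φ : Submodule ℝ C(K, ℝ)) (hΦclosed : IsClosed (Φ : Set C(K, ℝ)))
    (hsep : ∀ x y : K, x ≠ y → ∃ φ ∈ Φ, φ x ≠ φ y)
    (hconst : ∀ c : ℝ, ContinuousMap.const K c ∈ Φ)
    (C : Set K) (hC : IsClosed C) :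
    List.TFAE
      [TraceConvexSet Φ (hconst 1) C,
       ∃ S : Set (↥Φ × ℝ),
         (∃ M : ℝ, ∀ p ∈ S, ‖(p.1 : C(K, ℝ))‖ ≤ M) ∧
         (∃ M' : ℝ, ∀ p ∈ S, |p.2| ≤ M') ∧
         C = {x : K | ∀ p ∈ S, (p.1 : C(K, ℝ)) x ≤ p.2},
       ∃ f : K → ℝ, LscConvexTrace Φ (hconst 1) f ∧ C = {x : K | f x ≤ 0}] :=
  stmt6_general Φ hsep hconst C hC
end

section
/- Let Φ be a real Banach space and S ⊆ Φ* be a nonempty weak*-compact subset that is metrizable in the weak* topology. Then S has a weak*-exposed point, and consequently the set of extreme points of S is nonempty. -/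
/-!
Since `S` is compact metrizable, `C(S, ℝ)` is separable, so countably many vectors `yₙ` (scaled
so that `‖yₙ‖ ≤ 1` and `|p yₙ| ≤ 1` on `S`) already separate the points of `S`. This embeds `S`
into a weighted `ℓ²` via `p ↦ (p yₙ)ₙ`, with weights `2⁻ⁿ`. A point `p` of `S` maximizing the
weighted norm `∑ 2⁻ⁿ (p yₙ)²` is exposed by itself, i.e. by `x = ∑ 2⁻ⁿ (p yₙ) yₙ`: for `q ≠ p`,
`0 < ‖q - p‖² ≤ 2 ⟪p, p⟫ - 2 ⟪q, p⟫ = 2 (p x - q x)`. Exposed points are extreme.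
-/

open Set TopologicalSpace

theorem ContinuousMap.exists_seq_separating {X Y : Type*} [TopologicalSpace X]
    [SecondCountableTopology X] [LocallyCompactSpace X] [TopologicalSpace Y]
    [SecondCountableTopology Y] [T2Space Y] {A : Set C(X, Y)} (hA : A.Nonempty) :
    ∃ f : ℕ → C(X, Y), (∀ n, f n ∈ A) ∧
      ∀ a b : X, (∀ n, f n a = f n b) → ∀ g ∈ A, g a = g b := by
  have : Nonempty A := hA.to_subtype
  obtain ⟨u, hu⟩ := exists_dense_seq A
  refine ⟨fun n => u n, fun n => (u n).2, fun a b hab g hg => ?_⟩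
  have hclosed : IsClosed {h : A | h.1 a = h.1 b} :=
    isClosed_eq ((continuous_eval_const a).comp continuous_subtype_val)
      ((continuous_eval_const b).comp continuous_subtype_val)
  exact hu.induction_on (p := fun h : A => h.1 a = h.1 b) ⟨g, hg⟩ hclosed hab

theorem tsum_mul_mul_lt_tsum_mul_sq {ι : Type*} {w a b : ι → ℝ} (hw : ∀ i, 0 < w i)
    (ha : Summable fun i => w i * a i ^ 2) (hb : Summable fun i => w i * b i ^ 2)
    (hle : ∑' i, w i * b i ^ 2 ≤ ∑' i, w i * a i ^ 2) (hne : a ≠ b) :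
    ∑' i, w i * a i * b i < ∑' i, w i * a i ^ 2 := by
  have hab : Summable fun i => w i * a i * b i := by
    refine (ha.add hb).of_norm_bounded fun i => ?_
    rw [Real.norm_eq_abs, abs_le]
    constructor <;> nlinarith [hw i, sq_nonneg (a i + b i), sq_nonneg (a i - b i)]
  have hexpand : ∀ i,
      w i * (a i - b i) ^ 2 = w i * a i ^ 2 - 2 * (w i * a i * b i) + w i * b i ^ 2 :=
    fun i => by ring
  have hdiff : Summable fun i => w i * (a i - b i) ^ 2 := by
    simp_rw [hexpand]
    exact (ha.sub (hab.mul_left 2)).add hb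
  obtain ⟨i, hi⟩ := Function.ne_iff.mp hne
  have hpos : 0 < ∑' i, w i * (a i - b i) ^ 2 :=
    hdiff.tsum_pos (fun j => mul_nonneg (hw j).le (sq_nonneg _)) i
      (mul_pos (hw i) (sq_pos_of_ne_zero (sub_ne_zero.mpr hi)))
  rw [tsum_congr hexpand, (ha.sub (hab.mul_left 2)).tsum_add hb, ha.tsum_sub (hab.mul_left 2),
    tsum_mul_left] at hpos
  linarith

theorem mem_exposedPoints_of_forall_lt {𝕜 E : Type*} [TopologicalSpace 𝕜] [Ring 𝕜]
    [LinearOrder 𝕜] [AddCommMonoid E] [TopologicalSpace E] [Module 𝕜 E] {A : Set E} {x : E}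
    (hx : x ∈ A) {l : StrongDual 𝕜 E} (hl : ∀ y ∈ A, y ≠ x → l y < l x) :
    x ∈ A.exposedPoints 𝕜 := by
  refine ⟨hx, l, fun y hy => ?_⟩
  rcases eq_or_ne y x with rfl | hyx
  · exact ⟨le_rfl, fun _ => rfl⟩
  · exact ⟨(hl y hy hyx).le, fun h => absurd h (hl y hy hyx).not_ge⟩

namespace WeakDual

variable {Φ : Type*} [NormedAddCommGroup Φ] [NormedSpace ℝ Φ] {S : Set (WeakDual ℝ Φ)}

theorem exists_pos_smul_bounded (hS : IsCompact S) (x : Φ) :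
    ∃ t : ℝ, 0 < t ∧ ‖t • x‖ ≤ 1 ∧ ∀ p ∈ S, |p (t • x)| ≤ 1 := by
  obtain ⟨C, hC⟩ := hS.exists_bound_of_continuousOn (eval_continuous x).continuousOn
  set M := max ‖x‖ C + 1
  have hM : 0 < M := by positivity
  refine ⟨M⁻¹, inv_pos.mpr hM, ?_, fun p hp => ?_⟩
  · rw [norm_smul, Real.norm_of_nonneg (inv_pos.mpr hM).le, inv_mul_le_iff₀ hM]
    linarith [le_max_left ‖x‖ C]
  · rw [map_smul, smul_eq_mul, abs_mul, abs_of_pos (inv_pos.mpr hM), inv_mul_le_iff₀ hM]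
    have hpx : |p x| ≤ C := by simpa only [Real.norm_eq_abs] using hC p hp
    linarith [le_max_right ‖x‖ C]

theorem exists_seq_separating (hS : IsCompact S) [MetrizableSpace S] :
    ∃ y : ℕ → Φ, (∀ n, ‖y n‖ ≤ 1) ∧ (∀ n, ∀ p ∈ S, |p (y n)| ≤ 1) ∧
      ∀ p ∈ S, ∀ q ∈ S, (∀ n, p (y n) = q (y n)) → p = q := by
  have : CompactSpace S := isCompact_iff_compactSpace.mp hS
  have : SecondCountableTopology S := by
    let := metrizableSpaceMetric S
    infer_instance
  let e : Φ → C(S, ℝ) := fun x => ⟨fun p => p.1 x, (eval_continuous x).comp continuous_subtype_val⟩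
  let B : Set Φ := {x | ‖x‖ ≤ 1 ∧ ∀ p ∈ S, |p x| ≤ 1}
  obtain ⟨f, hfB, hf⟩ := ContinuousMap.exists_seq_separating (A := e '' B) ⟨e 0, 0, by simp [B]⟩
  choose y hyB hye using hfB
  refine ⟨y, fun n => (hyB n).1, fun n => (hyB n).2, fun p hp q hq hpq => ?_⟩
  refine DFunLike.ext p q fun x => ?_
  obtain ⟨t, ht, htB⟩ := exists_pos_smul_bounded hS x
  have := hf ⟨p, hp⟩ ⟨q, hq⟩ (fun n => by rw [← hye n]; exact hpq n) (e (t • x)) ⟨_, htB, rfl⟩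
  simpa [e, ht.ne'] using this

theorem exists_exposed_of_seq_separating [CompleteSpace Φ] (hne : S.Nonempty)
    (hS : IsCompact S) {y : ℕ → Φ} (hy_norm : ∀ n, ‖y n‖ ≤ 1)
    (hy_bdd : ∀ n, ∀ p ∈ S, |p (y n)| ≤ 1)
    (hy_sep : ∀ p ∈ S, ∀ q ∈ S, (∀ n, p (y n) = q (y n)) → p = q) :
    ∃ p ∈ S, ∃ x : Φ, ∀ q ∈ S, q ≠ p → q x < p x := by
  set w : ℕ → ℝ := fun n => (1 / 2) ^ n
  have hw_pos : ∀ n, 0 < w n := fun n => by positivity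
  have hw : Summable w := summable_geometric_two
  have hsq_le : ∀ p ∈ S, ∀ n, ‖w n * p (y n) ^ 2‖ ≤ w n := fun p hp n => by
    rw [norm_mul, Real.norm_of_nonneg (hw_pos n).le, norm_pow, Real.norm_eq_abs]
    exact mul_le_of_le_one_right (hw_pos n).le (pow_le_one₀ (abs_nonneg _) (hy_bdd n p hp))
  have hsum : ∀ p ∈ S, Summable fun n => w n * p (y n) ^ 2 :=
    fun p hp => hw.of_norm_bounded (hsq_le p hp)
  obtain ⟨p, hpS, hp_max⟩ : ∃ p ∈ S, IsMaxOn (fun p => ∑' n, w n * p (y n) ^ 2) S p := by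
    refine hS.exists_isMaxOn hne ?_
    rw [continuousOn_iff_continuous_domRestrict]
    exact continuous_tsum (fun n => continuous_const.mul
      (((eval_continuous (y n)).comp continuous_subtype_val).pow 2)) hw fun n p => hsq_le p p.2 n
  have hx : Summable fun n => (w n * p (y n)) • y n := by
    refine hw.of_norm_bounded fun n => ?_
    rw [norm_smul, norm_mul, Real.norm_of_nonneg (hw_pos n).le, Real.norm_eq_abs]
    calc w n * |p (y n)| * ‖y n‖ ≤ w n * 1 * 1 := by gcongr; exacts [hy_bdd n p hpS, hy_norm n]
      _ = w n := by ring
  refine ⟨p, hpS, ∑' n, (w n * p (y n)) • y n, fun q hq hqp => ?_⟩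
  have heval : ∀ r : WeakDual ℝ Φ,
      r (∑' n, (w n * p (y n)) • y n) = ∑' n, w n * p (y n) * r (y n) := fun r => by
    refine (ContinuousLinearMap.map_tsum (r : Φ →L[ℝ] ℝ) hx).trans (tsum_congr fun n => ?_)
    exact (r : Φ →L[ℝ] ℝ).map_smul _ _
  rw [heval, heval]
  have hp_sq : ∑' n, w n * p (y n) * p (y n) = ∑' n, w n * p (y n) ^ 2 :=
    tsum_congr fun n => by ring
  rw [hp_sq]
  refine tsum_mul_mul_lt_tsum_mul_sq hw_pos (hsum p hpS) (hsum q hq) (hp_max hq) fun h => ?_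
  exact hqp (hy_sep q hq p hpS fun n => (congrFun h n).symm)

end WeakDual

/-- Let `Φ` be a real Banach space and `S ⊆ Φ*` a nonempty weak*-compact
subset that is metrizable in the weak* topology. Then `S` has a weak*-exposed point, and
consequently the set of extreme points of `S` is nonempty. -/
theorem stmt14 {Φ : Type*} [NormedAddCommGroup Φ] [NormedSpace ℝ Φ] [CompleteSpace Φ]
    (S : Set (WeakDual ℝ Φ)) (hne : S.Nonempty) (hcomp : IsCompact S)
    (hmetr : TopologicalSpace.MetrizableSpace ↥S) :
    (∃ p ∈ S, ∃ x : Φ, ∀ q ∈ S, q ≠ p → q x < p x) ∧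
    (Set.extremePoints ℝ S).Nonempty := by
  obtain ⟨y, hy_norm, hy_bdd, hy_sep⟩ := WeakDual.exists_seq_separating hcomp
  obtain ⟨p, hpS, x, hx⟩ :=
    WeakDual.exists_exposed_of_seq_separating hne hcomp hy_norm hy_bdd hy_sep
  refine ⟨⟨p, hpS, x, hx⟩, p, exposedPoints_subset_extremePoints ?_⟩
  exact mem_exposedPoints_of_forall_lt (l := WeakBilin.eval _ x) hpS hx
end

section
/- Let Φ be a real Banach space and C ⊆ Φ* a nonempty convex weak*-compact set that is metrizable in the weak* topology. Let {F_i}_{i∈I} be a nonempty family of real-valued weak*-upper semicontinuous convex functions on C whose sets of maximizers have nonempty intersection, i.e. C_max(I) := ∩_{i∈I} argmax_C F_i ≠ ∅. Then C_max(I) has a weak*-exposed point, every extreme point of C_max(I) is an extreme point of C, and in particular there exists an extreme point p̄ of C with F_i(p̄) = max_{p∈C} F_i(p) for all i ∈ I. -/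
/-!
The common maximizer set `K` is weak*-compact (each argmax of an usc function is closed) and an
extreme subset of `C` (convexity), so extreme points of `K` are extreme in `C`. Compactness and
metrizability give a sequence `yₙ` in the unit ball, with `|p yₙ| ≤ 1` on `C`, that separates
points of `C`; hence `p ↦ (p yₙ)ₙ` embeds `C` injectively and affinely into `ℓ²` with weights
`2⁻ⁿ`. If `p̄` maximizes the norm of this embedding over `K`, the polarization identity shows that
`x = ∑ 2⁻ⁿ p̄(yₙ) yₙ` weak*-exposes `p̄` in `K`; exposed points are extreme.
-/

open Set

theorem isClosed_setOf_isMaxOn {X β : Type*} [TopologicalSpace X] [LinearOrder β]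
    {s : Set X} {f : X → β} (hs : IsClosed s) (hf : UpperSemicontinuousOn f s) :
    IsClosed {p ∈ s | IsMaxOn f s p} := by
  rcases eq_empty_or_nonempty {p ∈ s | IsMaxOn f s p} with h | ⟨p₀, hp₀s, hp₀⟩
  · exact h ▸ isClosed_empty
  obtain ⟨v, hv, hsv⟩ := upperSemicontinuousOn_iff_preimage_Ici.1 hf (f p₀)
  have : {p ∈ s | IsMaxOn f s p} = s ∩ f ⁻¹' Ici (f p₀) := by
    ext p
    exact and_congr_right fun _ ↦
      ⟨fun hp ↦ hp hp₀s, fun hp _ hq ↦ (hp₀ hq).trans hp⟩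
  rw [this, hsv]
  exact hs.inter hv

theorem ConvexOn.isExtreme_setOf_isMaxOn {𝕜 E β : Type*} [Semiring 𝕜] [PartialOrder 𝕜]
    [AddCommMonoid E] [SMul 𝕜 E] [AddCommMonoid β] [LinearOrder β] [IsOrderedCancelAddMonoid β]
    [Module 𝕜 β] [PosSMulStrictMono 𝕜 β] {s : Set E} {f : E → β}
    (hf : ConvexOn 𝕜 s f) : IsExtreme 𝕜 s {p ∈ s | IsMaxOn f s p} := by
  refine ⟨sep_subset _ _, fun x₁ hx₁ x₂ hx₂ x ⟨_, hx⟩ hseg ↦ ⟨hx₁, fun y hy ↦ ?_⟩⟩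
  exact (hx hy).trans (hf.le_left_of_right_le hx₁ hx₂ hseg (hx hx₂))

theorem exists_seq_separating_of_continuous {X Y ι : Type*} [TopologicalSpace X]
    [SecondCountableTopology X] [TopologicalSpace Y] [T2Space Y] [Nonempty ι]
    (f : ι → X → Y) (hf : ∀ i, Continuous (f i)) (hsep : ∀ a b, a ≠ b → ∃ i, f i a ≠ f i b) :
    ∃ e : ℕ → ι, ∀ a b, a ≠ b → ∃ n, f (e n) a ≠ f (e n) b := by
  obtain ⟨T, hTc, hTU⟩ := TopologicalSpace.isOpen_iUnion_countable
    (fun i ↦ {ab : X × X | f i ab.1 ≠ f i ab.2})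
    fun i ↦ isOpen_ne_fun ((hf i).comp continuous_fst) ((hf i).comp continuous_snd)
  obtain ⟨e, he⟩ :=
    (hTc.insert (Classical.arbitrary ι)).exists_eq_range (insert_nonempty _ _)
  refine ⟨e, fun a b hab ↦ ?_⟩
  have : (a, b) ∈ ⋃ i ∈ T, {ab : X × X | f i ab.1 ≠ f i ab.2} :=
    hTU ▸ mem_iUnion.2 (hsep a b hab)
  obtain ⟨i, hiT, hi⟩ := mem_iUnion₂.1 this
  obtain ⟨n, rfl⟩ : i ∈ range e := he ▸ mem_insert_of_mem _ hiT
  exact ⟨n, hi⟩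

noncomputable def weightedInner (w u v : ℕ → ℝ) : ℝ := ∑' n, w n * u n * v n

theorem summable_weight_mul_mul {w u v : ℕ → ℝ} (hw : Summable w) (hw0 : ∀ n, 0 ≤ w n)
    {M N : ℝ} (hu : ∀ n, |u n| ≤ M) (hv : ∀ n, |v n| ≤ N) :
    Summable fun n ↦ w n * u n * v n := by
  refine (hw.mul_right (M * N)).of_norm_bounded fun n ↦ ?_
  rw [Real.norm_eq_abs, abs_mul, abs_mul, abs_of_nonneg (hw0 n), mul_assoc]
  exact mul_le_mul_of_nonneg_left
    (mul_le_mul (hu n) (hv n) (abs_nonneg _) ((abs_nonneg _).trans (hu n))) (hw0 n)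

theorem weightedInner_lt_of_weightedInner_le {w u v : ℕ → ℝ} (hw : Summable w)
    (hw0 : ∀ n, 0 < w n) {M : ℝ} (hu : ∀ n, |u n| ≤ M) (hv : ∀ n, |v n| ≤ M)
    (hle : weightedInner w u u ≤ weightedInner w v v) (hne : u ≠ v) :
    weightedInner w v u < weightedInner w v v := by
  have hw0' n := (hw0 n).le
  have hd n : |(u - v) n| ≤ M + M := (abs_sub _ _).trans (add_le_add (hu n) (hv n))
  have hsum {a b : ℕ → ℝ} {A B : ℝ} (ha : ∀ n, |a n| ≤ A) (hb : ∀ n, |b n| ≤ B) :=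
    summable_weight_mul_mul hw hw0' ha hb
  have hpolar : 2 * (weightedInner w v u - weightedInner w v v) =
      weightedInner w u u - weightedInner w v v - weightedInner w (u - v) (u - v) := by
    unfold weightedInner
    rw [← (hsum hv hu).tsum_sub (hsum hv hv), ← tsum_mul_left,
      ← (hsum hu hu).tsum_sub (hsum hv hv),
      ← ((hsum hu hu).sub (hsum hv hv)).tsum_sub (hsum hd hd)]
    congr 1; funext n; simp only [Pi.sub_apply]; ring
  obtain ⟨n, hn⟩ := Function.ne_iff.1 hne
  have hpos : 0 < weightedInner w (u - v) (u - v) :=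
    (hsum hd hd).tsum_pos (fun k ↦ by rw [mul_assoc]; exact mul_nonneg (hw0' k) (mul_self_nonneg _))
      n (by rw [mul_assoc]; exact mul_pos (hw0 n) (mul_self_pos.2 (sub_ne_zero.2 hn)))
  linarith

namespace WeakDual

theorem mem_exposedPoints_of_forall_lt {E : Type*} [AddCommGroup E]
    [TopologicalSpace E] [Module ℝ E] {A : Set (WeakDual ℝ E)} {p : WeakDual ℝ E} (hp : p ∈ A)
    (x : E) (hx : ∀ q ∈ A, q ≠ p → q x < p x) : p ∈ A.exposedPoints ℝ := by
  refine ⟨hp, WeakBilin.eval (topDualPairing ℝ E) x, fun q hq ↦ ?_⟩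
  change q x ≤ p x ∧ (p x ≤ q x → q = p)
  rcases eq_or_ne q p with rfl | hqp
  · simp
  · exact ⟨(hx q hq hqp).le, fun h ↦ absurd h (hx q hq hqp).not_ge⟩

variable {Φ : Type*} [NormedAddCommGroup Φ] [NormedSpace ℝ Φ]

theorem exists_smul_bounded_of_isCompact {A : Set (WeakDual ℝ Φ)} (hA : IsCompact A) (e : Φ) :
    ∃ c : ℝ, c ≠ 0 ∧ ‖c • e‖ ≤ 1 ∧ ∀ p ∈ A, |p (c • e)| ≤ 1 := by
  obtain ⟨M, hM⟩ := hA.exists_bound_of_continuousOn (eval_continuous e).continuousOn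
  set R := max 1 (max ‖e‖ M)
  have hR : 0 < R := lt_max_of_lt_left one_pos
  refine ⟨R⁻¹, inv_ne_zero hR.ne', ?_, fun p hp ↦ ?_⟩
  · rw [norm_smul, Real.norm_of_nonneg (inv_nonneg.2 hR.le)]
    exact inv_mul_le_one_of_le₀ (le_max_of_le_right (le_max_left _ _)) hR.le
  · rw [map_smul, smul_eq_mul, abs_mul, abs_of_pos (inv_pos.2 hR)]
    exact inv_mul_le_one_of_le₀ ((hM p hp).trans (le_max_of_le_right (le_max_right _ _))) hR.le

theorem exists_seq_separating_of_isCompact {C : Set (WeakDual ℝ Φ)} (hC : IsCompact C)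
    [TopologicalSpace.MetrizableSpace C] :
    ∃ y : ℕ → Φ, (∀ n, ‖y n‖ ≤ 1) ∧ (∀ p ∈ C, ∀ n, |p (y n)| ≤ 1) ∧
      ∀ p ∈ C, ∀ q ∈ C, (∀ n, p (y n) = q (y n)) → p = q := by
  -- compact metric spaces are second countable
  let := TopologicalSpace.metrizableSpaceMetric C
  have := isCompact_iff_compactSpace.1 hC
  obtain ⟨e, he⟩ := exists_seq_separating_of_continuous (fun x (p : C) ↦ (p : WeakDual ℝ Φ) x)
    (fun x ↦ (eval_continuous x).comp continuous_subtype_val)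
    fun p q hpq ↦ by simpa [DFunLike.ext_iff] using Subtype.coe_ne_coe.2 hpq
  choose c hc0 hc using fun n ↦ exists_smul_bounded_of_isCompact hC (e n)
  refine ⟨fun n ↦ c n • e n, fun n ↦ (hc n).1, fun p hp n ↦ (hc n).2 p hp, ?_⟩
  intro p hp q hq hpq
  by_contra hne
  obtain ⟨n, hn⟩ := he ⟨p, hp⟩ ⟨q, hq⟩ (by simpa using hne)
  apply hn
  simpa [hc0 n] using hpq n

theorem exists_forall_lt_of_separating [CompleteSpace Φ] {A : Set (WeakDual ℝ Φ)}
    (hA : IsCompact A) (hAne : A.Nonempty) {y : ℕ → Φ} (hy : ∀ n, ‖y n‖ ≤ 1)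
    (hyA : ∀ p ∈ A, ∀ n, |p (y n)| ≤ 1)
    (hsep : ∀ p ∈ A, ∀ q ∈ A, (∀ n, p (y n) = q (y n)) → p = q) :
    ∃ p ∈ A, ∃ x : Φ, ∀ q ∈ A, q ≠ p → q x < p x := by
  set w : ℕ → ℝ := fun n ↦ (1 / 2) ^ n
  have hw : Summable w := summable_geometric_two
  have hw0 n : 0 < w n := by positivity
  have hcont : ContinuousOn (fun p : WeakDual ℝ Φ ↦ weightedInner w (p <| y ·) (p <| y ·)) A := by
    refine continuousOn_tsum (fun n ↦ ?_) hw fun n p hp ↦ ?_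
    · exact (continuous_const.mul (eval_continuous _) |>.mul (eval_continuous _)).continuousOn
    · rw [Real.norm_eq_abs, abs_mul, abs_mul, abs_of_pos (hw0 n), mul_assoc]
      exact mul_le_of_le_one_right (hw0 n).le
        (mul_le_one₀ (hyA p hp n) (abs_nonneg _) (hyA p hp n))
  obtain ⟨p, hpA, hpmax⟩ := hA.exists_isMaxOn hAne hcont
  have hx : Summable fun n ↦ (w n * p (y n)) • y n := by
    refine hw.of_norm_bounded fun n ↦ ?_
    rw [norm_smul, Real.norm_eq_abs, abs_mul, abs_of_pos (hw0 n), mul_assoc]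
    exact mul_le_of_le_one_right (hw0 n).le
      (mul_le_one₀ (hyA p hpA n) (norm_nonneg _) (hy n))
  refine ⟨p, hpA, ∑' n, (w n * p (y n)) • y n, fun q hqA hqp ↦ ?_⟩
  have happly (r : WeakDual ℝ Φ) :
      r (∑' n, (w n * p (y n)) • y n) = weightedInner w (p <| y ·) (r <| y ·) := by
    rw [← toStrongDual_apply, (toStrongDual r).map_tsum hx]
    simp [weightedInner]
  rw [happly, happly]
  exact weightedInner_lt_of_weightedInner_le hw hw0 (hyA q hqA) (hyA p hpA) (hpmax hqA)
    fun h ↦ hqp (hsep q hqA p hpA (congrFun h))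

end WeakDual

theorem stmt15_general {Φ : Type*} [NormedAddCommGroup Φ] [NormedSpace ℝ Φ] [CompleteSpace Φ]
    (C : Set (WeakDual ℝ Φ))
    (hCcomp : IsCompact C) (hmetr : TopologicalSpace.MetrizableSpace ↥C)
    {ι : Type*} [Nonempty ι] (F : ι → WeakDual ℝ Φ → ℝ)
    (hFconv : ∀ i, ConvexOn ℝ C (F i))
    (hFusc : ∀ i, UpperSemicontinuousOn (F i) C)
    (hmax : (⋂ i, {p ∈ C | IsMaxOn (F i) C p}).Nonempty) :
    (∃ p ∈ ⋂ i, {q ∈ C | IsMaxOn (F i) C q}, ∃ x : Φ,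
      ∀ q ∈ ⋂ i, {r ∈ C | IsMaxOn (F i) C r}, q ≠ p → q x < p x) ∧
    (Set.extremePoints ℝ (⋂ i, {q ∈ C | IsMaxOn (F i) C q}) ⊆ Set.extremePoints ℝ C) ∧
    ∃ p ∈ Set.extremePoints ℝ C, ∀ i, IsMaxOn (F i) C p := by
  set K := ⋂ i, {p ∈ C | IsMaxOn (F i) C p}
  have hK : IsExtreme ℝ C K := isExtreme_iInter fun i ↦ (hFconv i).isExtreme_setOf_isMaxOn
  have hKcomp : IsCompact K := hCcomp.of_isClosed_subset
    (isClosed_iInter fun i ↦ isClosed_setOf_isMaxOn hCcomp.isClosed (hFusc i)) hK.subset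
  obtain ⟨y, hy, hyC, hsep⟩ := WeakDual.exists_seq_separating_of_isCompact hCcomp
  obtain ⟨p, hpK, x, hx⟩ := WeakDual.exists_forall_lt_of_separating hKcomp hmax hy
    (fun p hp ↦ hyC p (hK.subset hp)) fun p hp q hq ↦ hsep p (hK.subset hp) q (hK.subset hq)
  have hpext : p ∈ K.extremePoints ℝ :=
    exposedPoints_subset_extremePoints (WeakDual.mem_exposedPoints_of_forall_lt hpK x hx)
  exact ⟨⟨p, hpK, x, hx⟩, hK.extremePoints_subset_extremePoints,
    p, hK.extremePoints_subset_extremePoints hpext, fun i ↦ (mem_iInter.1 hpK i).2⟩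

/-- **Common extreme maximizer.** Let `Φ` be a real Banach space and
`C ⊆ Φ*` a nonempty convex weak*-compact metrizable set. If a nonempty family of
real-valued weak*-usc convex functions on `C` has a common maximizer, then the set of
common maximizers has a weak*-exposed point, its extreme points are extreme points of `C`,
and in particular some extreme point of `C` maximizes all the functions simultaneously. -/
theorem stmt15 {Φ : Type*} [NormedAddCommGroup Φ] [NormedSpace ℝ Φ] [CompleteSpace Φ]
    (C : Set (WeakDual ℝ Φ)) (hCne : C.Nonempty) (hCconv : Convex ℝ C)
    (hCcomp : IsCompact C) (hmetr : TopologicalSpace.MetrizableSpace ↥C)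
    {ι : Type*} [Nonempty ι] (F : ι → WeakDual ℝ Φ → ℝ)
    (hFconv : ∀ i, ConvexOn ℝ C (F i))
    (hFusc : ∀ i, UpperSemicontinuousOn (F i) C)
    (hmax : (⋂ i, {p ∈ C | IsMaxOn (F i) C p}).Nonempty) :
    (∃ p ∈ ⋂ i, {q ∈ C | IsMaxOn (F i) C q}, ∃ x : Φ,
      ∀ q ∈ ⋂ i, {r ∈ C | IsMaxOn (F i) C r}, q ≠ p → q x < p x) ∧
    (Set.extremePoints ℝ (⋂ i, {q ∈ C | IsMaxOn (F i) C q}) ⊆ Set.extremePoints ℝ C) ∧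
    ∃ p ∈ Set.extremePoints ℝ C, ∀ i, IsMaxOn (F i) C p :=
  stmt15_general C hCcomp hmetr F hFconv hFusc hmax
end
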